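/- Let n be a power of 2 and let F_n be the n × n Discrete Fourier Transform matrix over ℂ, with entries F_n[j,k] = ω^{jk} for ω = exp(−2πi/n). Then F_n ∈ (BB*)^2; that is, F_n is a product of 2 matrices each of the form M1 · M2* with M1, M2 butterfly matrices of size n. -/

import Mathlib

noncomputable section

open Matrix

/-- A butterfly factor matrix of size `n` with block size `k`: a block-diagonal matrix
whose `n/k` diagonal blocks are butterfly factors of size `k`, i.e. `k × k` matrices of
the block form `[[D1, D2], [D3, D4]]` with each `Dᵢ` a `(k/2) × (k/2)` diagonal matrix.
Equivalently, nonzero entries may occur only at positions `(i, j)` lying in the same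
diagonal `k × k` block and with `i ≡ j (mod k/2)`. -/
def IsButterflyFactorMatrix (n k : ℕ) (B : Matrix (Fin n) (Fin n) ℂ) : Prop :=
  2 ≤ k ∧ k ∣ n ∧
    ∀ i j : Fin n, B i j ≠ 0 →
      i.val / k = j.val / k ∧ i.val % (k / 2) = j.val % (k / 2)

/-- A butterfly matrix of size `n = 2^b`: a product `B_n · B_{n/2} · ⋯ · B_2` where `B_k`
is a butterfly factor matrix of size `n` with block size `k`. -/
def IsButterflyMatrix (n : ℕ) (M : Matrix (Fin n) (Fin n) ℂ) : Prop :=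
  ∃ b : ℕ, n = 2 ^ b ∧
    ∃ B : ℕ → Matrix (Fin n) (Fin n) ℂ,
      (∀ t, 1 ≤ t → t ≤ b → IsButterflyFactorMatrix n (2 ^ t) (B t)) ∧
      M = (List.ofFn fun t : Fin b => B (b - t.val)).prod

/-- `M ∈ BB*`: `M = M1 · M2ᴴ` with `M1`, `M2` butterfly matrices. -/
def InBBStar (n : ℕ) (M : Matrix (Fin n) (Fin n) ℂ) : Prop :=
  ∃ M1 M2 : Matrix (Fin n) (Fin n) ℂ,
    IsButterflyMatrix n M1 ∧ IsButterflyMatrix n M2 ∧ M = M1 * M2ᴴ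

/-- `M ∈ (BB*)^w`: `M` is a product of `w` matrices each in `BB*`. -/
def InBBStarPow (n w : ℕ) (M : Matrix (Fin n) (Fin n) ℂ) : Prop :=
  ∃ f : Fin w → Matrix (Fin n) (Fin n) ℂ,
    (∀ i, InBBStar n (f i)) ∧ M = (List.ofFn f).prod

/-- `M ∈ (BB*)^w_e`: `M` (of size `n × n`) is the upper-left `n × n` corner of an
`en × en` matrix `E ∈ (BB*)^w`. -/
def InBBStarPowExp (n w e : ℕ) (M : Matrix (Fin n) (Fin n) ℂ) : Prop :=
  ∃ E : Matrix (Fin (e * n)) (Fin (e * n)) ℂ,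
    InBBStarPow (e * n) w E ∧
    ∀ (i j : Fin n) (hi : i.val < e * n) (hj : j.val < e * n),
      M i j = E ⟨i.val, hi⟩ ⟨j.val, hj⟩

/-- `P` is a permutation matrix. -/
def IsPermutationMatrix (n : ℕ) (P : Matrix (Fin n) (Fin n) ℂ) : Prop :=
  ∃ σ : Equiv.Perm (Fin n), ∀ i j, P i j = if i = σ j then 1 else 0

/-- `M` (with at most one nonzero entry per column) meets the `s` balance condition:
partitioning the columns into consecutive chunks of size `s`, every chunk contains, for
each residue `0 ≤ m < s`, exactly one column whose nonzero entry lies in a row with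
index `≡ m (mod s)`. -/
def MeetsBalance (n s : ℕ) (M : Matrix (Fin n) (Fin n) ℂ) : Prop :=
  ∀ c < n / s, ∀ m < s,
    {j : Fin n | j.val / s = c ∧ ∃ i : Fin n, M i j ≠ 0 ∧ i.val % s = m}.ncard = 1

/-- `M` is modular-balanced: it meets the `2^j` balance condition for all `2 ≤ 2^j ≤ n`. -/
def ModularBalanced (n : ℕ) (M : Matrix (Fin n) (Fin n) ℂ) : Prop :=
  ∀ j : ℕ, 1 ≤ j → 2 ^ j ≤ n → MeetsBalance n (2 ^ j) M

/-- `H` is a horizontal step matrix: whenever `H[i,j] ≠ 0` and `H[i',j'] ≠ 0` with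
`j ≤ j'`, we have `j' - j ≥ (i' - i) mod n`. -/
def IsHorizontalStep (n : ℕ) (H : Matrix (Fin n) (Fin n) ℂ) : Prop :=
  ∀ i i' j j' : Fin n, j.val ≤ j'.val → H i j ≠ 0 → H i' j' ≠ 0 →
    ((i'.val : ℤ) - (i.val : ℤ)) % (n : ℤ) ≤ (j'.val : ℤ) - (j.val : ℤ)

/-- Reversal of the `b` low-order bits of `x`. -/
def bitRev (b x : ℕ) : ℕ :=
  (Finset.range b).sum fun t => x / 2 ^ t % 2 * 2 ^ (b - 1 - t)

/-!
Write `n = 2 ^ b` and let `π` reverse the `b` bits of an index. The DFT matrix factors as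
`F = F' * P_π` with `F' i j = ω ^ (i * rev j)`, and `F'` is a butterfly matrix: this is the
Cooley–Tukey factorisation, the factor of block size `2 ^ (t + 1)` carrying the twiddle
`ω ^ (i * j_t * 2 ^ (b - 1 - t))`. Hence `F' = F' * 1ᴴ ∈ BB*`.

It remains to put `P_π` in `BB*`. A permutation `σ` gives a butterfly matrix as soon as, for each
`t`, the low `t` bits of `σ y` together with the high `b - t` bits of `y` determine `y`: the
factors then change one bit at a time. For `σ` linear over `GF(2)` with matrix `A`, this says
that every leading principal minor of `A` is nonzero. For the Pascal matrix `A` mod 2 this holds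
for `A` (it is unitriangular) and for its row reversal `J A`, whose leading minors are the
bottom-left minors of `A`; Vandermonde's identity factors these as a reversed Pascal matrix times
a unitriangular one. Since `σ_{J A} = π ∘ σ_A`, we get
`P_π = P_{σ_A⁻¹} * (P_{σ_{J A}⁻¹})ᴴ ∈ BB*`.
-/

open Equiv Function Finset

def AgreeExceptBit (t x y : ℕ) : Prop :=
  x / 2 ^ (t + 1) = y / 2 ^ (t + 1) ∧ x % 2 ^ t = y % 2 ^ t

instance (t x y : ℕ) : Decidable (AgreeExceptBit t x y) :=
  inferInstanceAs (Decidable (_ ∧ _))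

lemma isButterflyMatrix_of_agreeExceptBit {b : ℕ}
    {B : ℕ → Matrix (Fin (2 ^ b)) (Fin (2 ^ b)) ℂ}
    (hB : ∀ t < b, ∀ x y, B (t + 1) x y ≠ 0 → AgreeExceptBit t x y) :
    IsButterflyMatrix (2 ^ b) (List.ofFn fun s : Fin b => B (b - s)).prod := by
  refine ⟨b, rfl, B, fun t ht htb => ?_, rfl⟩
  obtain ⟨t, rfl⟩ := Nat.exists_eq_add_of_le' ht
  refine ⟨le_self_pow₀ one_le_two (by omega), pow_dvd_pow 2 htb, fun x y hxy => ?_⟩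
  rw [pow_succ, Nat.mul_div_cancel _ two_pos, ← pow_succ]
  exact hB t (by omega) x y hxy

lemma prod_ofFn_sub_succ {M : Type*} [Monoid M] (B : ℕ → M) (t : ℕ) :
    (List.ofFn fun s : Fin (t + 1) => B (t + 1 - s)).prod =
      B (t + 1) * (List.ofFn fun s : Fin t => B (t - s)).prod := by
  simp [List.ofFn_succ]

section Splice

variable {b : ℕ}

lemma mod_add_two_pow_mul_div_lt {x y : ℕ} (hx : x < 2 ^ b) (hy : y < 2 ^ b) (t : ℕ) :
    x % 2 ^ t + 2 ^ t * (y / 2 ^ t) < 2 ^ b := by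
  rcases le_or_gt t b with h | h
  · have hb : 2 ^ b = 2 ^ t * 2 ^ (b - t) := by rw [← pow_add, Nat.add_sub_cancel' h]
    have hy' : y / 2 ^ t < 2 ^ (b - t) := Nat.div_lt_of_lt_mul (hb ▸ hy)
    calc x % 2 ^ t + 2 ^ t * (y / 2 ^ t) < 2 ^ t * (y / 2 ^ t + 1) := by
          rw [mul_add_one, add_comm]; exact Nat.add_lt_add_left (Nat.mod_lt x (Nat.two_pow_pos t)) _
      _ ≤ 2 ^ b := hb ▸ Nat.mul_le_mul_left _ hy'
  · rw [Nat.div_eq_of_lt (hy.trans (Nat.pow_lt_pow_right one_lt_two h)), mul_zero, add_zero]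
    exact (Nat.mod_le _ _).trans_lt hx

def splice (t : ℕ) (x y : Fin (2 ^ b)) : Fin (2 ^ b) :=
  ⟨x % 2 ^ t + 2 ^ t * (y / 2 ^ t), mod_add_two_pow_mul_div_lt x.2 y.2 t⟩

variable (t : ℕ) (x y : Fin (2 ^ b))

lemma splice_mod : (splice t x y : ℕ) % 2 ^ t = x % 2 ^ t := by
  simp [splice, Nat.add_mul_mod_self_left]

lemma splice_div : (splice t x y : ℕ) / 2 ^ t = y / 2 ^ t := by
  simp [splice, Nat.add_mul_div_left _ _ (Nat.two_pow_pos t),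
    Nat.div_eq_of_lt (Nat.mod_lt _ (Nat.two_pow_pos t))]

variable {t x y} in
lemma eq_splice {z : Fin (2 ^ b)} (hmod : (z : ℕ) % 2 ^ t = x % 2 ^ t)
    (hdiv : (z : ℕ) / 2 ^ t = y / 2 ^ t) : z = splice t x y :=
  Fin.ext <| by rw [← Nat.mod_add_div z (2 ^ t), hmod, hdiv]; rfl

lemma splice_zero : splice 0 x y = y := by
  ext; simp [splice, Nat.mod_one]

lemma splice_self : splice t x x = x :=
  (eq_splice rfl rfl).symm

variable {t} in
lemma splice_of_le (h : b ≤ t) : splice t x y = x := by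
  have hpow : 2 ^ b ≤ 2 ^ t := Nat.pow_le_pow_right two_pos h
  ext
  simp [splice, Nat.mod_eq_of_lt (x.2.trans_le hpow), Nat.div_eq_of_lt (y.2.trans_le hpow)]

lemma agreeExceptBit_splice_succ : AgreeExceptBit t (splice (t + 1) x y) (splice t x y) := by
  constructor
  · rw [splice_div, pow_succ, ← Nat.div_div_eq_div_mul, ← Nat.div_div_eq_div_mul, splice_div]
  · have hdvd : 2 ^ t ∣ 2 ^ (t + 1) := pow_dvd_pow 2 t.le_succ
    rw [← Nat.mod_mod_of_dvd _ hdvd, splice_mod, Nat.mod_mod_of_dvd _ hdvd, splice_mod]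

end Splice

lemma apply_eq_of_permMatrix_apply_ne_zero {n R : Type*} [DecidableEq n] [Zero R] [One R]
    {π : Perm n} {x y : n} (h : π.permMatrix R x y ≠ 0) : π x = y := by
  by_contra hne
  simp [PEquiv.toMatrix_apply, hne] at h

theorem isButterflyMatrix_permMatrix_inv {b : ℕ} (σ : Perm (Fin (2 ^ b)))
    (hσ : ∀ t ≤ b, Injective fun y => splice t (σ y) y) :
    IsButterflyMatrix (2 ^ b) ((σ⁻¹).permMatrix ℂ) := by
  have hinj (t : ℕ) : Injective fun y => splice t (σ y) y := by
    rcases le_or_gt t b with h | h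
    · exact hσ t h
    · simpa only [splice_of_le _ _ h.le] using σ.injective
  -- `ρ` runs from `ρ 0 = 1` to `ρ b = σ`, and consecutive stages differ in a single bit
  let ρ (t : ℕ) : Perm (Fin (2 ^ b)) := Equiv.ofBijective _ (hinj t).bijective_of_finite
  let B (t : ℕ) : Matrix (Fin (2 ^ b)) (Fin (2 ^ b)) ℂ :=
    (ρ (t - 1) * (ρ t)⁻¹).permMatrix ℂ
  have hprod (t : ℕ) :
      (List.ofFn fun s : Fin t => B (t - s)).prod = ((ρ t)⁻¹).permMatrix ℂ := by
    induction t with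
    | zero =>
      have : ρ 0 = 1 := Equiv.ext fun y => splice_zero (σ y) y
      simp [this]
    | succ t ih =>
      rw [prod_ofFn_sub_succ, ih, ← permMatrix_mul]
      simp only [Nat.add_sub_cancel, inv_mul_cancel_left]
  have hρb : ρ b = σ := Equiv.ext fun y => splice_of_le _ _ le_rfl
  rw [← hρb, ← hprod]
  refine isButterflyMatrix_of_agreeExceptBit fun t _ x y hxy => ?_
  obtain ⟨z, rfl⟩ := (ρ (t + 1)).surjective x
  have : ρ t z = y := by simpa [B] using apply_eq_of_permMatrix_apply_ne_zero hxy
  exact this ▸ agreeExceptBit_splice_succ t (σ z) z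

lemma isButterflyMatrix_one (b : ℕ) :
    IsButterflyMatrix (2 ^ b) (1 : Matrix (Fin (2 ^ b)) (Fin (2 ^ b)) ℂ) := by
  simpa using isButterflyMatrix_permMatrix_inv (1 : Perm (Fin (2 ^ b)))
    fun t _ _ _ h => by simpa [splice_self] using h

lemma IsButterflyMatrix.inBBStar {b : ℕ} {M : Matrix (Fin (2 ^ b)) (Fin (2 ^ b)) ℂ}
    (hM : IsButterflyMatrix (2 ^ b) M) : InBBStar (2 ^ b) M :=
  ⟨M, 1, hM, isButterflyMatrix_one b, by simp⟩

section Bits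

variable {b : ℕ}

lemma div_two_pow_mod_two_eq_of_mod_eq {x y t i : ℕ} (h : x % 2 ^ t = y % 2 ^ t) (hi : i < t) :
    x / 2 ^ i % 2 = y / 2 ^ i % 2 := by
  have key (z : ℕ) : z / 2 ^ i % 2 = z % 2 ^ t / 2 ^ i % 2 := by
    rw [show 2 ^ t = 2 ^ i * 2 ^ (t - i) by rw [← pow_add, Nat.add_sub_cancel' hi.le],
      Nat.mod_mul_right_div_self, Nat.mod_mod_of_dvd _ (dvd_pow_self 2 (by omega))]
  rw [key x, key y, h]

lemma div_two_pow_eq_of_div_eq {x y t i : ℕ} (h : x / 2 ^ t = y / 2 ^ t) (hi : t ≤ i) :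
    x / 2 ^ i = y / 2 ^ i := by
  rw [← Nat.add_sub_cancel' hi, pow_add, ← Nat.div_div_eq_div_mul, ← Nat.div_div_eq_div_mul,
    h]

def bitsEquiv (b : ℕ) : (Fin b → ZMod 2) ≃ Fin (2 ^ b) :=
  finFunctionFinEquiv

lemma bitsEquiv_symm_apply_val (x : Fin (2 ^ b)) (i : Fin b) :
    ((bitsEquiv b).symm x i).val = (x : ℕ) / 2 ^ (i : ℕ) % 2 :=
  finFunctionFinEquiv_symm_apply_val x i

lemma bitsEquiv_apply_val (v : Fin b → ZMod 2) :
    (bitsEquiv b v : ℕ) = ∑ i, (v i).val * 2 ^ (i : ℕ) :=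
  finFunctionFinEquiv_apply v

lemma bitsEquiv_symm_apply_eq_of_mod_eq {x y : Fin (2 ^ b)} {t : ℕ}
    (h : (x : ℕ) % 2 ^ t = y % 2 ^ t) {i : Fin b} (hi : (i : ℕ) < t) :
    (bitsEquiv b).symm x i = (bitsEquiv b).symm y i :=
  ZMod.val_injective 2 <| by
    rw [bitsEquiv_symm_apply_val, bitsEquiv_symm_apply_val, div_two_pow_mod_two_eq_of_mod_eq h hi]

lemma bitsEquiv_symm_apply_eq_of_div_eq {x y : Fin (2 ^ b)} {t : ℕ}
    (h : (x : ℕ) / 2 ^ t = y / 2 ^ t) {i : Fin b} (hi : t ≤ i) :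
    (bitsEquiv b).symm x i = (bitsEquiv b).symm y i :=
  ZMod.val_injective 2 <| by
    rw [bitsEquiv_symm_apply_val, bitsEquiv_symm_apply_val, div_two_pow_eq_of_div_eq h hi]

def bitRevPerm (b : ℕ) : Perm (Fin (2 ^ b)) :=
  (bitsEquiv b).permCongr (Fin.revPerm.arrowCongr (Equiv.refl _))

lemma val_bitRevPerm (x : Fin (2 ^ b)) : (bitRevPerm b x : ℕ) = bitRev b x := by
  rw [bitRevPerm, permCongr_apply, bitsEquiv_apply_val, bitRev, ← Fin.sum_univ_eq_sum_range,
    ← Equiv.sum_comp Fin.revPerm]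
  refine Fintype.sum_congr _ _ fun i => ?_
  simp [bitsEquiv_symm_apply_val, Fin.val_rev]
  exact .inl (by omega)

end Bits

lemma eq_of_mulVec_castLE_eq {R : Type*} [CommRing R] [NoZeroDivisors R] {m t : ℕ}
    {M : Matrix (Fin m) (Fin m) R} (ht : t ≤ m)
    (hM : (M.submatrix (Fin.castLE ht) (Fin.castLE ht)).det ≠ 0) {v w : Fin m → R}
    (hlow : ∀ r : Fin t, (M *ᵥ v) (Fin.castLE ht r) = (M *ᵥ w) (Fin.castLE ht r))
    (hhigh : ∀ c : Fin m, t ≤ c → v c = w c) : v = w := by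
  have hu (c : Fin m) (hc : t ≤ c) : (v - w) c = 0 := sub_eq_zero.mpr (hhigh c hc)
  have hsub : M.submatrix (Fin.castLE ht) (Fin.castLE ht) *ᵥ ((v - w) ∘ Fin.castLE ht) = 0 := by
    ext r
    calc _ = (M *ᵥ (v - w)) (Fin.castLE ht r) :=
          Fintype.sum_of_injective _ (Fin.castLE_injective ht) _ _
            (fun c hc => by
              rw [hu c (not_lt.mp fun h => hc ⟨⟨c, h⟩, rfl⟩), mul_zero]) fun _ => rfl
      _ = 0 := by rw [mulVec_sub, Pi.sub_apply, hlow, sub_self]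
  funext c
  rw [← sub_eq_zero]
  by_cases hc : t ≤ c
  · exact hu c hc
  · exact congrFun (eq_zero_of_mulVec_eq_zero hM hsub) ⟨c, not_le.mp hc⟩

section Pascal

variable {b : ℕ}

def mulVecBits (M : Matrix (Fin b) (Fin b) (ZMod 2)) (y : Fin (2 ^ b)) : Fin (2 ^ b) :=
  bitsEquiv b (M *ᵥ (bitsEquiv b).symm y)

lemma injective_splice_mulVecBits {M : Matrix (Fin b) (Fin b) (ZMod 2)}
    (hM : ∀ t (ht : t ≤ b), (M.submatrix (Fin.castLE ht) (Fin.castLE ht)).det ≠ 0)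
    {t : ℕ} (ht : t ≤ b) : Injective fun y => splice t (mulVecBits M y) y := by
  intro y y' (h : splice t _ y = splice t _ y')
  have hmod : (mulVecBits M y : ℕ) % 2 ^ t = mulVecBits M y' % 2 ^ t := by
    rw [← splice_mod t _ y, h, splice_mod]
  have hdiv : (y : ℕ) / 2 ^ t = y' / 2 ^ t := by
    rw [← splice_div t (mulVecBits M y) y, h, splice_div]
  apply (bitsEquiv b).symm.injective
  refine eq_of_mulVec_castLE_eq ht (hM t ht) (fun r => ?_)
    fun c hc => bitsEquiv_symm_apply_eq_of_div_eq hdiv hc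
  simpa [mulVecBits] using bitsEquiv_symm_apply_eq_of_mod_eq hmod (i := Fin.castLE ht r) r.2

lemma injective_mulVecBits {M : Matrix (Fin b) (Fin b) (ZMod 2)}
    (hM : ∀ t (ht : t ≤ b), (M.submatrix (Fin.castLE ht) (Fin.castLE ht)).det ≠ 0) :
    Injective (mulVecBits M) := by
  simpa only [splice_of_le _ _ le_rfl] using injective_splice_mulVecBits hM le_rfl

lemma bitRevPerm_mulVecBits (M : Matrix (Fin b) (Fin b) (ZMod 2)) (y : Fin (2 ^ b)) :
    bitRevPerm b (mulVecBits M y) = mulVecBits (M.submatrix Fin.rev id) y := by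
  simp only [bitRevPerm, mulVecBits, permCongr_apply, symm_apply_apply]
  rfl

def pascalMod2 (b : ℕ) : Matrix (Fin b) (Fin b) (ZMod 2) :=
  of fun i j => (i.val.choose j : ZMod 2)

lemma det_pascalMod2 (b : ℕ) : (pascalMod2 b).det = 1 := by
  rw [det_of_isLowerTriangular]
  · simp [pascalMod2]
  · intro i j hij
    simp [pascalMod2, Nat.choose_eq_zero_of_lt (show (i : ℕ) < j from hij)]

lemma det_pascalMod2_submatrix_castLE {t : ℕ} (ht : t ≤ b) :
    ((pascalMod2 b).submatrix (Fin.castLE ht) (Fin.castLE ht)).det = 1 :=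
  det_pascalMod2 t

lemma det_pascalMod2_rev_submatrix_castLE_ne_zero {t : ℕ} (ht : t ≤ b) :
    (((pascalMod2 b).submatrix Fin.rev id).submatrix (Fin.castLE ht) (Fin.castLE ht)).det ≠ 0 :=
    by
  -- Vandermonde's identity factors the bottom-left block as (row-reversed Pascal) * (unitriangular)
  have hLU : ((pascalMod2 b).submatrix Fin.rev id).submatrix (Fin.castLE ht) (Fin.castLE ht) =
      (pascalMod2 t).submatrix Fin.revPerm id *
        of fun k c : Fin t => if k ≤ c then ((b - t).choose (c - k) : ZMod 2) else 0 := by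
    ext r c
    have hvdm : (b - (r + 1)).choose c =
        ∑ k ∈ range (c + 1), (t - (r + 1)).choose k * (b - t).choose (c - k) := by
      rw [show b - (r + 1) = t - (r + 1) + (b - t) by omega, Nat.add_choose_eq,
        Finset.Nat.sum_antidiagonal_eq_sum_range_succ_mk]
    have hrange : (range t).filter (· ≤ (c : ℕ)) = range (c + 1) := by
      ext k; simp only [mem_filter, mem_range]; omega
    simp only [submatrix_apply, mul_apply, of_apply, pascalMod2, Fin.val_rev, Fin.val_castLE,
      id, Fin.revPerm_apply, mul_ite, mul_zero, Fin.le_iff_val_le_val, hvdm]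
    rw [Fin.sum_univ_eq_sum_range (fun k => if k ≤ (c : ℕ) then
      ((t - (r + 1)).choose k : ZMod 2) * ((b - t).choose (c - k) : ZMod 2) else 0), ← sum_filter,
      hrange]
    push_cast; rfl
  have hU :
      (of fun k c : Fin t => if k ≤ c then ((b - t).choose (c - k) : ZMod 2) else 0).det = 1 := by
    rw [det_of_isUpperTriangular]
    · simp
    · intro k c hck
      simp [not_le.mpr (show c < k from hck)]
  rw [hLU, det_mul, det_permute, det_pascalMod2, hU]
  rcases Int.units_eq_one_or (Perm.sign (Fin.revPerm : Perm (Fin t))) with h | h <;> simp [h]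

end Pascal

theorem inBBStar_permMatrix_bitRevPerm (b : ℕ) :
    InBBStar (2 ^ b) ((bitRevPerm b).permMatrix ℂ) := by
  have hP (t : ℕ) (ht : t ≤ b) :
      ((pascalMod2 b).submatrix (Fin.castLE ht) (Fin.castLE ht)).det ≠ 0 := by
    rw [det_pascalMod2_submatrix_castLE]; exact one_ne_zero
  let L : Perm (Fin (2 ^ b)) := Equiv.ofBijective _ (injective_mulVecBits hP).bijective_of_finite
  have hL : ∀ t ≤ b, Injective fun y => splice t (L y) y :=
    fun _ => injective_splice_mulVecBits hP
  have hRL : ∀ t ≤ b, Injective fun y => splice t ((bitRevPerm b * L) y) y := by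
    simpa only [Perm.mul_apply, L, ofBijective_apply, bitRevPerm_mulVecBits] using
      fun t => injective_splice_mulVecBits fun _ => det_pascalMod2_rev_submatrix_castLE_ne_zero
  refine ⟨_, _, isButterflyMatrix_permMatrix_inv L hL,
    isButterflyMatrix_permMatrix_inv _ hRL, ?_⟩
  rw [conjTranspose_permMatrix, inv_inv, ← permMatrix_mul, mul_inv_cancel_right]

section DFT

def dftFactor (ω : ℂ) (b t : ℕ) : Matrix (Fin (2 ^ b)) (Fin (2 ^ b)) ℂ :=
  of fun x y => if AgreeExceptBit (t - 1) x y then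
    ω ^ ((x : ℕ) * ((y : ℕ) / 2 ^ (t - 1) % 2 * 2 ^ (b - t))) else 0

variable {b : ℕ} {ω : ℂ}

lemma agreeExceptBit_of_dftFactor_ne_zero {t : ℕ} {x y : Fin (2 ^ b)}
    (h : dftFactor ω b (t + 1) x y ≠ 0) : AgreeExceptBit t x y := by
  by_contra hxy
  exact h (by simp [dftFactor, hxy])

lemma mul_apply_eq_mul_splice {R : Type*} [NonUnitalNonAssocSemiring R]
    {A C : Matrix (Fin (2 ^ b)) (Fin (2 ^ b)) R} {t : ℕ} {i j : Fin (2 ^ b)}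
    (hA : ∀ y, A i y ≠ 0 → (y : ℕ) % 2 ^ t = i % 2 ^ t)
    (hC : ∀ y, C y j ≠ 0 → (y : ℕ) / 2 ^ t = j / 2 ^ t) :
    (A * C) i j = A i (splice t i j) * C (splice t i j) j := by
  refine (mul_apply ..).trans (Fintype.sum_eq_single _ fun y hy => ?_)
  rcases eq_or_ne (A i y) 0 with hAy | hAy
  · rw [hAy, zero_mul]
  rcases eq_or_ne (C y j) 0 with hCy | hCy
  · rw [hCy, mul_zero]
  exact absurd (eq_splice (hA y hAy) (hC y hCy)) hy

lemma prod_dftFactor_apply (hω : ω ^ 2 ^ b = 1) {t : ℕ} (ht : t ≤ b) (i j : Fin (2 ^ b)) :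
    (List.ofFn fun s : Fin t => dftFactor ω b (t - s)).prod i j =
      if (i : ℕ) / 2 ^ t = j / 2 ^ t then
        ω ^ ((i : ℕ) * ∑ s ∈ range t, (j : ℕ) / 2 ^ s % 2 * 2 ^ (b - 1 - s)) else 0 := by
  induction t generalizing i with
  | zero => simp [one_apply, Fin.val_inj]
  | succ t ih =>
    have ih := ih (by omega)
    rw [prod_ofFn_sub_succ, mul_apply_eq_mul_splice (t := t)
      (fun y hy => (agreeExceptBit_of_dftFactor_ne_zero hy).2.symm)
      (fun y hy => by_contra fun h => hy (by rw [ih, if_neg h]))]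
    have hmod := splice_mod t i j
    have hdiv := splice_div t i j
    generalize splice t i j = y at hmod hdiv ⊢
    have hagree : AgreeExceptBit t i y ↔ (i : ℕ) / 2 ^ (t + 1) = j / 2 ^ (t + 1) := by
      rw [AgreeExceptBit, hmod, div_two_pow_eq_of_div_eq hdiv (Nat.le_add_right t 1)]
      exact and_iff_left rfl
    -- the exponents of the first `t` factors are multiples of `2 ^ (b - t)`
    have hS : 2 ^ b ∣ 2 ^ t * ∑ s ∈ range t, (j : ℕ) / 2 ^ s % 2 * 2 ^ (b - 1 - s) :=
      (pow_mul_pow_sub 2 (by omega : t ≤ b)).symm.dvd.trans <| mul_dvd_mul_left _ <|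
        dvd_sum fun s hs => dvd_mul_of_dvd_right (pow_dvd_pow 2 (by rw [mem_range] at hs; omega)) _
    rw [ih, if_pos hdiv]
    simp only [dftFactor, of_apply, Nat.add_sub_cancel, hagree]
    split_ifs
    · rw [hdiv, pow_eq_pow_of_modEq ((Nat.ModEq.mul_right' _ hmod).of_dvd hS) hω, ← pow_add,
        sum_range_succ, show b - (t + 1) = b - 1 - t by omega]
      ring_nf
    · rw [zero_mul]

theorem isButterflyMatrix_bitRevDFT (hω : ω ^ 2 ^ b = 1) :
    IsButterflyMatrix (2 ^ b) (of fun i j : Fin (2 ^ b) => ω ^ ((i : ℕ) * bitRev b j)) := by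
  convert isButterflyMatrix_of_agreeExceptBit (B := dftFactor ω b) fun t _ x y hxy => ?_
  · ext i j
    rw [prod_dftFactor_apply hω le_rfl,
      if_pos (by rw [Nat.div_eq_of_lt i.2, Nat.div_eq_of_lt j.2])]
    rfl
  · exact agreeExceptBit_of_dftFactor_ne_zero hxy

end DFT

/-- The `n × n` DFT matrix, with entries `ω^{jk}`, `ω = exp(-2πi/n)`,
is in `(BB*)^2`. -/
theorem dft_in_BBStar_pow_two (b n : ℕ) (hn : n = 2 ^ b) :
    InBBStarPow n 2 (Matrix.of fun j k : Fin n =>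
      Complex.exp (-(2 * Real.pi * Complex.I) / n) ^ (j.val * k.val)) := by
  subst hn
  set ω := Complex.exp (-(2 * Real.pi * Complex.I) / (2 ^ b : ℕ))
  have hω : ω ^ 2 ^ b = 1 := by
    rw [← Complex.exp_nat_mul, mul_div_cancel₀ _ (by exact_mod_cast (Nat.two_pow_pos b).ne'),
      Complex.exp_neg, Complex.exp_two_pi_mul_I, inv_one]
  refine ⟨![of fun i j => ω ^ ((i : ℕ) * bitRev b j), (bitRevPerm b).permMatrix ℂ],
    Fin.forall_fin_two.mpr ⟨(isButterflyMatrix_bitRevDFT hω).inBBStar,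
      inBBStar_permMatrix_bitRevPerm b⟩, ?_⟩
  ext i j
  simp [List.ofFn_succ, PEquiv.mul_toMatrix_toPEquiv, ← val_bitRevPerm]
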